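/- The 5×5 matrix Ã_k (the hydrodynamic block of the Euler dissipation matrix) admits the decomposition Ã_k = L D Lᵀ where L is the given unit lower triangular matrix and D = diag(ρ_k^ln, p̄_k, p̄_k, p̄_k, (1/ρ_k^ln)(p_k*)²/(γ_k−1)); hence Ã_k is symmetric positive definite whenever ρ_k^ln, p̄_k, p_k* > 0 and γ_k > 1. -/

import Mathlib

/-!
Multiplying out `L D Lᵀ` recovers `Ã` entry by entry; the only non-polynomial identity
involved is `ρ · (Ē/ρ) = Ē`. Being unit lower triangular, `L` is invertible, so `L D Lᵀ` is a
congruence of the diagonal matrix `D`, whose entries are positive; hence `Ã` is positive definite.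
-/

open Matrix

/-- The 5×5 hydrodynamic (Euler) block `Ã` of the dissipation matrix. -/
noncomputable def Atilde (ρ pbar pstar γ Ebar : ℝ) (v : Fin 3 → ℝ) :
    Matrix (Fin 5) (Fin 5) ℝ :=
  !![ρ, ρ * v 0, ρ * v 1, ρ * v 2, Ebar;
     ρ * v 0, ρ * v 0 * v 0 + pbar, ρ * v 0 * v 1, ρ * v 0 * v 2,
       (Ebar + pbar) * v 0;
     ρ * v 1, ρ * v 1 * v 0, ρ * v 1 * v 1 + pbar, ρ * v 1 * v 2,
       (Ebar + pbar) * v 1;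
     ρ * v 2, ρ * v 2 * v 0, ρ * v 2 * v 1, ρ * v 2 * v 2 + pbar,
       (Ebar + pbar) * v 2;
     Ebar, (Ebar + pbar) * v 0, (Ebar + pbar) * v 1, (Ebar + pbar) * v 2,
       (1 / ρ) * (pstar ^ 2 / (γ - 1) + Ebar ^ 2)
         + pbar * (v 0 ^ 2 + v 1 ^ 2 + v 2 ^ 2)]

/-- The unit lower triangular factor `L` of the `LDLᵀ` decomposition. -/
def Lmat (v : Fin 3 → ℝ) (r : ℝ) : Matrix (Fin 5) (Fin 5) ℝ :=
  !![1, 0, 0, 0, 0;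
     v 0, 1, 0, 0, 0;
     v 1, 0, 1, 0, 0;
     v 2, 0, 0, 1, 0;
     r, v 0, v 1, v 2, 1]


theorem Matrix.PosDef.mul_diagonal_mul_transpose_of_isUnit {n R : Type*} [Fintype n]
    [DecidableEq n] [CommRing R] [PartialOrder R] [StarRing R] [TrivialStar R]
    [StarOrderedRing R] [NoZeroDivisors R] {L : Matrix n n R} (hL : IsUnit L)
    {d : n → R} (hd : ∀ i, 0 < d i) : (L * diagonal d * Lᵀ).PosDef := by
  simpa only [conjTranspose_eq_transpose_of_trivial] using
    (PosDef.diagonal hd).mul_mul_conjTranspose_same (vecMul_injective_of_isUnit hL)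

theorem Lmat_isLowerTriangular (v : Fin 3 → ℝ) (r : ℝ) : (Lmat v r).IsLowerTriangular := by
  intro i j hij
  rw [OrderDual.toDual_lt_toDual] at hij
  fin_cases i <;> fin_cases j <;> simp_all [Lmat, Fin.lt_def]

theorem Lmat_det (v : Fin 3 → ℝ) (r : ℝ) : (Lmat v r).det = 1 := by
  rw [det_of_isLowerTriangular _ (Lmat_isLowerTriangular v r)]
  simp [Lmat, Fin.prod_univ_five]

theorem Lmat_isUnit (v : Fin 3 → ℝ) (r : ℝ) : IsUnit (Lmat v r) :=
  (isUnit_iff_isUnit_det _).2 (by simp [Lmat_det])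

theorem Atilde_eq_Lmat_mul_diagonal_mul_transpose (ρ pbar pstar γ Ebar : ℝ) (v : Fin 3 → ℝ)
    (hρ : ρ ≠ 0) :
    Atilde ρ pbar pstar γ Ebar v
        = Lmat v (Ebar / ρ)
            * diagonal ![ρ, pbar, pbar, pbar, (1 / ρ) * pstar ^ 2 / (γ - 1)]
            * (Lmat v (Ebar / ρ))ᵀ := by
  ext i j
  fin_cases i <;> fin_cases j <;>
    simp [Atilde, Lmat, mul_apply, vecMul_diagonal, Fin.sum_univ_five,
      -mul_eq_mul_left_iff, -mul_eq_mul_right_iff] <;>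
    field_simp
  ring

/-- `Ã = L D Lᵀ` with `L` unit lower triangular (fifth row
`(Ē/ρ, v₁, v₂, v₃, 1)`) and `D = diag(ρ, p̄, p̄, p̄, (1/ρ)(p*)²/(γ−1))`;
hence `Ã` is symmetric positive definite whenever `ρ, p̄, p* > 0`, `γ > 1`. -/
theorem Atilde_LDLt_and_posDef (ρ pbar pstar γ Ebar : ℝ) (v : Fin 3 → ℝ)
    (hρ : 0 < ρ) (hp : 0 < pbar) (hps : 0 < pstar) (hγ : 1 < γ) :
    Atilde ρ pbar pstar γ Ebar v
        = Lmat v (Ebar / ρ)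
            * Matrix.diagonal ![ρ, pbar, pbar, pbar, (1 / ρ) * pstar ^ 2 / (γ - 1)]
            * (Lmat v (Ebar / ρ))ᵀ ∧
    (Atilde ρ pbar pstar γ Ebar v).PosDef := by
  have hLDL := Atilde_eq_Lmat_mul_diagonal_mul_transpose ρ pbar pstar γ Ebar v hρ.ne'
  refine ⟨hLDL, hLDL ▸ PosDef.mul_diagonal_mul_transpose_of_isUnit (Lmat_isUnit v _) ?_⟩
  have hlast : 0 < ρ⁻¹ * pstar ^ 2 / (γ - 1) := by
    have : 0 < γ - 1 := sub_pos.2 hγ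
    positivity
  intro i
  fin_cases i <;> simp [hρ, hp, hlast]
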